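/- Let G = (V,E) be a finite simple graph with |V| = n, let 1/3 ≤ α ≤ 1 and 0 < ε < 1, and let k be an integer with k + ⌈4k/ε²⌉ ≤ n. Let V' ⊆ V be a set of k + ⌈4k/ε²⌉ vertices of largest degrees (d(u) ≥ d(w) for all u ∈ V', w ∈ V∖V'). Then there exists S ⊆ V' with |S| = k such that cov_α(S) ≥ (1−ε)·cov_α(O) for every O ⊆ V with |O| = k. -/

import Mathlib

open Finset

/-- Number of edges of `G` with both endpoints in `X`. -/
noncomputable def mIn {V : Type*} (G : SimpleGraph V) (X : Finset V) : ℕ :=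
  {e ∈ G.edgeSet | ∀ v ∈ e, v ∈ X}.ncard

/-- Number of edges of `G` with one endpoint in `X` and the other in `Y`. -/
noncomputable def mBtw {V : Type*} (G : SimpleGraph V) (X Y : Finset V) : ℕ :=
  {e ∈ G.edgeSet | ∃ u ∈ X, ∃ w ∈ Y, e = s(u, w)}.ncard

/-- `cov_α(S) = (1-α)·m(S) + α·m(S, V∖S)`. -/
noncomputable def cov {V : Type*} [Fintype V] [DecidableEq V] (G : SimpleGraph V) (α : ℝ)
    (S : Finset V) : ℝ :=
  (1 - α) * mIn G S + α * mBtw G S Sᶜ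

/-!
Let `S` maximise `cov_α` over the `k`-subsets of `V'`, with value `M`, and write
`t = ⌈4k/ε²⌉`. The key identity is `cov_α(X) = α·∑_{v ∈ X} d(v) − (3α − 1)·m(X)`.
Given `O`, let `A = O ∩ V'`, `r = |O ∖ V'|` and `W = V' ∖ A`, so `|W| = t + r`. Replacing
`O ∖ V'` by any `r`-subset `Y ⊆ W` does not decrease the degree sum, hence
`cov_α(O) ≤ cov_α(A ∪ Y) + 2(m(A, Y) + m(Y)) ≤ M + 2(m(A, Y) + m(Y))`.
Averaging over `Y` gives `m(A, Y) + m(Y) ≤ (r/w)·m(A, W) + r(r−1)/(w(w−1))·m(W)`.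
Both terms are controlled by the maximality of `S`, using `α·m(X, Y) ≤ cov_α(X)` for
disjoint `X, Y`: averaging over `r`-subsets `Z ⊆ W` (tested on `A ∪ Z`) gives
`α·m(A, W)·t/w ≤ M`, and averaging the cut `m(T, W ∖ T)` over `k`-subsets `T ⊆ W` gives
`α·m(W)·2k(w−k)/(w(w−1)) ≤ M`. Since `4k ≤ ε²t`, this yields
`cov_α(O) ≤ (1 + 5ε²/2)·M`, and `(1 − ε)(1 + 5ε²/2) ≤ 1`.
-/

open scoped BigOperators

namespace Finset

variable {ι : Type*}

lemma sum_le_sum_of_card_eq_of_forall_le {M : Type*} [AddCommMonoid M] [LinearOrder M]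
    [IsOrderedAddMonoid M] {s t : Finset ι} {f : ι → M} (hst : #s = #t)
    (h : ∀ i ∈ s, ∀ j ∈ t, f i ≤ f j) : ∑ i ∈ s, f i ≤ ∑ j ∈ t, f j := by
  rcases t.eq_empty_or_nonempty with rfl | ht
  · rw [card_empty, card_eq_zero] at hst
    simp [hst]
  obtain ⟨j₀, hj₀, hmin⟩ := t.exists_min_image f ht
  calc ∑ i ∈ s, f i ≤ #s • f j₀ := sum_le_card_nsmul _ _ _ fun i hi => h i hi j₀ hj₀
    _ = #t • f j₀ := by rw [hst]
    _ ≤ ∑ j ∈ t, f j := card_nsmul_le_sum _ _ _ hmin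

variable [DecidableEq ι]

lemma card_filter_powersetCard_subset_mul_choose {s W : Finset ι} (hsW : s ⊆ W) (r : ℕ) :
    #{Y ∈ W.powersetCard r | s ⊆ Y} * (#W).choose #s = (#W).choose r * r.choose #s := by
  rcases lt_or_ge r #s with hrs | hsr
  · rw [Nat.choose_eq_zero_of_lt hrs, mul_zero, card_eq_zero.2, zero_mul]
    refine filter_eq_empty_iff.2 fun Y hY hsY => ?_
    exact (card_le_card hsY).not_gt (by rw [(mem_powersetCard.1 hY).2]; exact hrs)
  · rw [card_filter_powersetCard_subset s W r hsW hsr, Nat.choose_mul hsr, mul_comm]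

lemma expect_card_filter_subset {β : Type*} {P : Finset β} {σ : β → Finset ι} {W : Finset ι}
    {j r : ℕ} (hσW : ∀ p ∈ P, σ p ⊆ W) (hσ : ∀ p ∈ P, #(σ p) = j) (hr : r ≤ #W) :
    𝔼 Y ∈ W.powersetCard r, (#{p ∈ P | σ p ⊆ Y} : ℝ) = r.choose j / (#W).choose j * #P := by
  rcases P.eq_empty_or_nonempty with rfl | ⟨p, hp⟩
  · simp
  have hj : ((#W).choose j : ℝ) ≠ 0 := by
    exact_mod_cast (Nat.choose_pos (hσ p hp ▸ card_le_card (hσW p hp))).ne'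
  have hC : ((#W).choose r : ℝ) ≠ 0 := by exact_mod_cast (Nat.choose_pos hr).ne'
  have hcount : ∀ q ∈ P, (#{Y ∈ W.powersetCard r | σ q ⊆ Y} : ℝ)
      = (#W).choose r * r.choose j / (#W).choose j := by
    intro q hq
    rw [eq_div_iff hj, ← hσ q hq]
    exact_mod_cast card_filter_powersetCard_subset_mul_choose (hσW q hq) r
  have hswap := sum_card_bipartiteAbove_eq_sum_card_bipartiteBelow
    (s := W.powersetCard r) (t := P) (r := fun Y p => σ p ⊆ Y)
  rw [expect_eq_sum_div_card, card_powersetCard, ← Nat.cast_sum]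
  simp only [bipartiteAbove, bipartiteBelow] at hswap
  rw [hswap, Nat.cast_sum, sum_congr rfl hcount, sum_const, nsmul_eq_mul]
  field_simp

end Finset

-- Applied with `a = m(A, W)`, `m = m(W)` and `t + r = |W|`; `hB` and `hC` are the two bounds
-- coming from the maximality of `S`.
lemma div_mul_add_div_mul_le {α δ M a m k r t : ℝ} (hα : 1 / 3 ≤ α) (hM₀ : 0 ≤ M)
    (ha : 0 ≤ a) (hm : 0 ≤ m) (hδ₀ : 0 ≤ δ) (hδ₁ : δ ≤ 1) (ht : 4 * k ≤ δ * t) (hr : 1 ≤ r)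
    (hrk : r ≤ k) (hB : α * a * (1 - r / (t + r)) ≤ M)
    (hC : α * m * (2 * k * (t + r - k) / ((t + r) * (t + r - 1))) ≤ M) :
    r / (t + r) * a + r * (r - 1) / ((t + r) * (t + r - 1)) * m ≤ 5 / 4 * δ * M := by
  have ht₀ : 0 < t := by nlinarith
  have htk : 4 * k ≤ t := ht.trans (mul_le_of_le_one_left ht₀.le hδ₁)
  have hw : 0 < t + r := by linarith
  have h3α : 0 ≤ 3 * α - 1 := by linarith
  set z := m / ((t + r) * (t + r - 1))
  have hz : 0 ≤ z := div_nonneg hm (mul_nonneg hw.le (by linarith))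
  have hat : a * t ≤ 3 * M * (t + r) := by
    rw [one_sub_div hw.ne', add_sub_cancel_right, mul_div_assoc', div_le_iff₀ hw] at hB
    linarith [mul_nonneg h3α (mul_nonneg ha ht₀.le)]
  have h₁ : r / (t + r) * a * t ≤ 3 * r * M := calc
    r / (t + r) * a * t = r * (a * t) / (t + r) := by ring
    _ ≤ r * (3 * M * (t + r)) / (t + r) := by gcongr
    _ = 3 * r * M := by field_simp
  have hkz : 0 ≤ k * z := mul_nonneg (by linarith) hz
  have hktz : k * t * z ≤ 2 * M := by
    rw [show α * m * (2 * k * (t + r - k) / ((t + r) * (t + r - 1))) =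
      α * z * (2 * k * (t + r - k)) by ring] at hC
    have hcut : 2 * k * (t + r - k) * z ≤ 3 * M := by
      linarith [mul_nonneg h3α (mul_nonneg hkz (by linarith : 0 ≤ t + r - k))]
    linarith [mul_nonneg hkz (by linarith : 0 ≤ t + r - k - 3 / 4 * t)]
  have h₂ : r * (r - 1) / ((t + r) * (t + r - 1)) * m * t ≤ 2 * k * M := by
    have hrr : r * (r - 1) ≤ k * k := mul_le_mul hrk (by linarith) (by linarith) (by linarith)
    have := mul_le_mul_of_nonneg_right hrr (mul_nonneg hz ht₀.le)
    have := mul_le_mul_of_nonneg_left hktz (by linarith : 0 ≤ k)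
    rw [show r * (r - 1) / ((t + r) * (t + r - 1)) * m = r * (r - 1) * z by ring]
    linarith
  have := mul_le_mul_of_nonneg_right ht hM₀
  have := mul_le_mul_of_nonneg_right hrk hM₀
  refine le_of_mul_le_mul_right ?_ ht₀
  linarith

namespace SimpleGraph

variable {V : Type*} (G : SimpleGraph V)

lemma two_mul_ncard_edgeSet_filter [Fintype V] (P : Sym2 V → Prop) :
    2 * {e ∈ G.edgeSet | P e}.ncard = {p : V × V | G.Adj p.1 p.2 ∧ P s(p.1, p.2)}.ncard := by
  classical
  set H := fromEdgeSet {e ∈ G.edgeSet | P e}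
  have hE : H.edgeSet = {e ∈ G.edgeSet | P e} := by
    rw [edgeSet_fromEdgeSet, sdiff_eq_left.2]
    exact Set.disjoint_left.2 fun e he => G.not_isDiag_of_mem_edgeSet he.1
  have hAdj : ∀ p : V × V, H.Adj p.1 p.2 ↔ G.Adj p.1 p.2 ∧ P s(p.1, p.2) := fun p => by
    rw [fromEdgeSet_adj]
    exact ⟨fun h => h.1, fun h => ⟨h, h.1.ne⟩⟩
  have h := H.two_mul_card_edgeFinset
  rw [← Set.ncard_coe_finset, ← Set.ncard_coe_finset, coe_edgeFinset, hE] at h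
  simpa only [coe_filter, mem_univ, true_and, hAdj] using h

lemma cov_nonneg [Fintype V] [DecidableEq V] {α : ℝ} (hα₀ : 0 ≤ α) (hα₁ : α ≤ 1)
    (X : Finset V) : 0 ≤ cov G α X := by
  have := sub_nonneg.2 hα₁
  unfold cov
  positivity

section Interedges

variable [DecidableRel G.Adj]

lemma card_interedges_comm (X Y : Finset V) : #(G.interedges X Y) = #(G.interedges Y X) :=
  have := G.symm
  Rel.card_interedges_comm X Y

variable [DecidableEq V]

lemma card_interedges_union_left {X Y Z : Finset V} (h : Disjoint X Y) :
    #(G.interedges (X ∪ Y) Z) = #(G.interedges X Z) + #(G.interedges Y Z) := by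
  rw [← card_union_of_disjoint (G.interedges_disjoint_left h Z)]
  congr 1
  ext p
  simp only [mem_union, mem_interedges_iff]
  tauto

lemma card_interedges_union_right {X Y Z : Finset V} (h : Disjoint Y Z) :
    #(G.interedges X (Y ∪ Z)) = #(G.interedges X Y) + #(G.interedges X Z) := by
  rw [← card_union_of_disjoint (G.interedges_disjoint_right X h)]
  congr 1
  ext p
  simp only [mem_union, mem_interedges_iff]
  tauto

lemma expect_card_interedges_powersetCard {X W : Finset V} {r : ℕ} (hr : r ≤ #W) :
    𝔼 Y ∈ W.powersetCard r, (#(G.interedges X Y) : ℝ) = r / #W * #(G.interedges X W) := by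
  have key := expect_card_filter_subset (P := G.interedges X W) (σ := fun p => {p.2}) (j := 1)
    (fun p hp => singleton_subset_iff.2 (G.mem_interedges_iff.1 hp).2.1)
    (fun _ _ => card_singleton _) hr
  simp only [Nat.choose_one_right] at key
  rw [← key]
  refine expect_congr rfl fun Y hY => ?_
  congr 2
  ext p
  simp only [mem_filter, mem_interedges_iff, singleton_subset_iff]
  have := (mem_powersetCard.1 hY).1
  grind

end Interedges

section Finite

variable [Fintype V] [DecidableRel G.Adj]

lemma two_mul_mIn (X : Finset V) : 2 * mIn G X = #(G.interedges X X) := by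
  rw [mIn, two_mul_ncard_edgeSet_filter, ← Set.ncard_coe_finset]
  congr 1
  ext ⟨a, b⟩
  simp only [Sym2.mem_iff, forall_eq_or_imp, forall_eq, Set.mem_ofPred_eq, SetLike.mem_coe,
    mem_interedges_iff]
  tauto

lemma mBtw_eq_card_interedges {X Y : Finset V} (h : Disjoint X Y) :
    mBtw G X Y = #(G.interedges X Y) := by
  classical
  have hXY : Disjoint (G.interedges X Y) (G.interedges Y X) :=
    Finset.disjoint_left.2 fun _ h₁ h₂ => Finset.disjoint_left.1 h (G.mem_interedges_iff.1 h₁).1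
      (G.mem_interedges_iff.1 h₂).1
  have h₂ : 2 * mBtw G X Y = #(G.interedges X Y) + #(G.interedges Y X) := by
    rw [mBtw, two_mul_ncard_edgeSet_filter, ← card_union_of_disjoint hXY, ← Set.ncard_coe_finset]
    congr 1
    ext ⟨a, b⟩
    simp only [Sym2.eq, Sym2.rel_iff', Prod.swap_prod_mk, Set.mem_ofPred_eq, Prod.mk.injEq,
      coe_union, Set.mem_union, SetLike.mem_coe, mem_interedges_iff]
    grind
  rw [card_interedges_comm G Y X] at h₂
  omega

lemma sum_degree_eq_card_interedges_univ (X : Finset V) :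
    ∑ v ∈ X, G.degree v = #(G.interedges X univ) := by
  rw [interedges_def, card_filter, sum_product]
  refine sum_congr rfl fun v _ => ?_
  rw [← card_neighborFinset_eq_degree, neighborFinset_eq_filter, card_filter]

lemma mIn_mono {X Y : Finset V} (h : X ⊆ Y) : mIn G X ≤ mIn G Y := by
  have := card_le_card (G.interedges_mono h h)
  have := G.two_mul_mIn X
  have := G.two_mul_mIn Y
  omega

variable [DecidableEq V]

lemma mIn_union {X Y : Finset V} (h : Disjoint X Y) :
    mIn G (X ∪ Y) = mIn G X + #(G.interedges X Y) + mIn G Y := by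
  have h₂ := G.two_mul_mIn (X ∪ Y)
  rw [card_interedges_union_left G h, card_interedges_union_right G h,
    card_interedges_union_right G h, card_interedges_comm G Y X] at h₂
  have := G.two_mul_mIn X
  have := G.two_mul_mIn Y
  omega

lemma sum_degree_eq_two_mul_mIn_add_mBtw (X : Finset V) :
    ∑ v ∈ X, G.degree v = 2 * mIn G X + mBtw G X Xᶜ := by
  rw [sum_degree_eq_card_interedges_univ, ← union_compl X,
    card_interedges_union_right G disjoint_compl_right, two_mul_mIn,
    mBtw_eq_card_interedges G disjoint_compl_right]

lemma cov_eq_sum_degree_sub (α : ℝ) (X : Finset V) :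
    cov G α X = α * ∑ v ∈ X, (G.degree v : ℝ) - (3 * α - 1) * mIn G X := by
  have h : ∑ v ∈ X, (G.degree v : ℝ) = 2 * mIn G X + mBtw G X Xᶜ := by
    exact_mod_cast G.sum_degree_eq_two_mul_mIn_add_mBtw X
  rw [cov, h]
  ring

lemma mul_card_interedges_le_cov {α : ℝ} (hα₀ : 0 ≤ α) (hα₁ : α ≤ 1) {X Y : Finset V}
    (h : Disjoint X Y) : α * #(G.interedges X Y) ≤ cov G α X := by
  have hle : #(G.interedges X Y) ≤ mBtw G X Xᶜ := by
    rw [mBtw_eq_card_interedges G disjoint_compl_right]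
    exact card_le_card (G.interedges_mono subset_rfl (subset_compl_iff_disjoint_left.2 h))
  have h₁ : 0 ≤ (1 - α) * (mIn G X : ℝ) := mul_nonneg (sub_nonneg.2 hα₁) (Nat.cast_nonneg _)
  have h₂ : α * (#(G.interedges X Y) : ℝ) ≤ α * mBtw G X Xᶜ :=
    mul_le_mul_of_nonneg_left (by exact_mod_cast hle) hα₀
  unfold cov
  linarith

lemma cov_union_le_cov_union_add {α : ℝ} (hα : 1 / 3 ≤ α) {A B Y : Finset V}
    (hAB : Disjoint A B) (hAY : Disjoint A Y)
    (hdeg : ∑ v ∈ B, G.degree v ≤ ∑ v ∈ Y, G.degree v) :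
    cov G α (A ∪ B) ≤ cov G α (A ∪ Y) + (3 * α - 1) * (#(G.interedges A Y) + mIn G Y) := by
  have hm : (mIn G A : ℝ) ≤ mIn G (A ∪ B) := by exact_mod_cast G.mIn_mono subset_union_left
  have hd : ∑ v ∈ B, (G.degree v : ℝ) ≤ ∑ v ∈ Y, (G.degree v : ℝ) := by exact_mod_cast hdeg
  rw [cov_eq_sum_degree_sub, cov_eq_sum_degree_sub, sum_union hAB, sum_union hAY,
    G.mIn_union hAY]
  push_cast
  nlinarith

lemma expect_mIn_powersetCard {W : Finset V} {r : ℕ} (hr : r ≤ #W) :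
    𝔼 Y ∈ W.powersetCard r, (mIn G Y : ℝ) = r * (r - 1) / (#W * (#W - 1)) * mIn G W := by
  have key := expect_card_filter_subset (P := G.interedges W W) (σ := fun p => {p.1, p.2})
    (j := 2) (fun p hp => by
      obtain ⟨h₁, h₂, -⟩ := G.mem_interedges_iff.1 hp
      exact insert_subset h₁ (singleton_subset_iff.2 h₂))
    (fun p hp => card_pair (G.mem_interedges_iff.1 hp).2.2.ne) hr
  rw [Nat.cast_choose_two, Nat.cast_choose_two, div_div_div_cancel_right₀ two_ne_zero] at key
  have hm : ∀ Y : Finset V, (mIn G Y : ℝ) = #(G.interedges Y Y) / 2 := fun Y => by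
    rw [← two_mul_mIn]
    push_cast
    ring
  simp_rw [hm, ← expect_div]
  rw [mul_div_assoc', ← key]
  congr 1
  refine expect_congr rfl fun Y hY => ?_
  congr 2
  ext p
  simp only [mem_filter, mem_interedges_iff, insert_subset_iff, singleton_subset_iff]
  have := (mem_powersetCard.1 hY).1
  grind

lemma exists_card_interedges_add_mIn_le (X : Finset V) {W : Finset V} {r : ℕ} (hr : r ≤ #W) :
    ∃ Y ∈ W.powersetCard r, (#(G.interedges X Y) + mIn G Y : ℝ) ≤
      r / #W * #(G.interedges X W) + r * (r - 1) / (#W * (#W - 1)) * mIn G W := by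
  apply exists_le_of_expect_le (powersetCard_nonempty.2 hr)
  rw [expect_add_distrib, G.expect_card_interedges_powersetCard hr, G.expect_mIn_powersetCard hr]

variable {α : ℝ} {U : Finset V} {k : ℕ} {M : ℝ}

lemma mul_card_interedges_mul_le_of_forall_cov_le (hα₀ : 0 ≤ α) (hα₁ : α ≤ 1)
    (hM : ∀ T ∈ U.powersetCard k, cov G α T ≤ M) {X W : Finset V} (hXU : X ⊆ U) (hWU : W ⊆ U)
    (hXW : Disjoint X W) {r : ℕ} (hr : r ≤ #W) (hk : #X + r = k) :
    α * #(G.interedges X W) * (1 - r / #W) ≤ M := by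
  obtain ⟨Z, hZ, hZle⟩ := exists_le_of_expect_le (powersetCard_nonempty.2 hr)
    (G.expect_card_interedges_powersetCard (X := X) hr).le
  obtain ⟨hZW, hZr⟩ := mem_powersetCard.1 hZ
  have hXZ : Disjoint X Z := hXW.mono_right hZW
  have hcut : α * #(G.interedges X (W \ Z)) ≤ M := calc
    α * #(G.interedges X (W \ Z)) ≤ α * #(G.interedges (X ∪ Z) (W \ Z)) := by
      gcongr
      exact G.interedges_mono subset_union_left subset_rfl
    _ ≤ cov G α (X ∪ Z) := G.mul_card_interedges_le_cov hα₀ hα₁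
      (disjoint_union_left.2 ⟨hXW.mono_right sdiff_subset, disjoint_sdiff⟩)
    _ ≤ M := hM _ (mem_powersetCard.2
      ⟨union_subset hXU (hZW.trans hWU), by rw [card_union_of_disjoint hXZ, hZr, hk]⟩)
  have hsplit := G.card_interedges_union_right (X := X) (disjoint_sdiff : Disjoint Z (W \ Z))
  rw [union_sdiff_of_subset hZW] at hsplit
  have hsplit' : (#(G.interedges X W) : ℝ) = #(G.interedges X Z) + #(G.interedges X (W \ Z)) := by
    exact_mod_cast hsplit
  linear_combination α * hsplit' + mul_le_mul_of_nonneg_left hZle hα₀ + hcut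

lemma mul_mIn_mul_le_of_forall_cov_le (hα₀ : 0 ≤ α) (hα₁ : α ≤ 1)
    (hM : ∀ T ∈ U.powersetCard k, cov G α T ≤ M) {W : Finset V} (hWU : W ⊆ U) (hkW : k ≤ #W)
    (hW : 2 ≤ #W) : α * mIn G W * (2 * k * (#W - k) / (#W * (#W - 1))) ≤ M := by
  have hcut : ∀ T ∈ W.powersetCard k,
      (#(G.interedges T (W \ T)) : ℝ) = #(G.interedges W T) - 2 * mIn G T := by
    intro T hT
    have h := G.card_interedges_union_right (X := T) (disjoint_sdiff : Disjoint T (W \ T))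
    rw [union_sdiff_of_subset (mem_powersetCard.1 hT).1, card_interedges_comm G T W,
      ← two_mul_mIn] at h
    rw [h]
    push_cast
    ring
  have hexp : 𝔼 T ∈ W.powersetCard k, (#(G.interedges T (W \ T)) : ℝ) =
      mIn G W * (2 * k * (#W - k) / (#W * (#W - 1))) := by
    have hW₀ : (#W : ℝ) ≠ 0 := by positivity
    have hW₁ : (#W : ℝ) - 1 ≠ 0 := by
      have : (2 : ℝ) ≤ #W := by exact_mod_cast hW
      linarith
    rw [expect_congr rfl hcut, expect_sub_distrib, G.expect_card_interedges_powersetCard hkW,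
      ← mul_expect, G.expect_mIn_powersetCard hkW, ← two_mul_mIn]
    push_cast
    field_simp
    ring
  obtain ⟨T, hT, hTge⟩ := exists_le_of_le_expect (powersetCard_nonempty.2 hkW) hexp.ge
  obtain ⟨hTW, hTk⟩ := mem_powersetCard.1 hT
  calc α * mIn G W * (2 * k * (#W - k) / (#W * (#W - 1)))
      = α * (mIn G W * (2 * k * (#W - k) / (#W * (#W - 1)))) := by ring
    _ ≤ α * #(G.interedges T (W \ T)) := mul_le_mul_of_nonneg_left hTge hα₀
    _ ≤ cov G α T := G.mul_card_interedges_le_cov hα₀ hα₁ disjoint_sdiff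
    _ ≤ M := hM T (mem_powersetCard.2 ⟨hTW.trans hWU, hTk⟩)

lemma exists_card_interedges_add_mIn_le_of_forall_cov_le (hα : 1 / 3 ≤ α) (hα₁ : α ≤ 1)
    (hM : ∀ T ∈ U.powersetCard k, cov G α T ≤ M) (hM₀ : 0 ≤ M) {δ : ℝ} (hδ₀ : 0 ≤ δ)
    (hδ₁ : δ ≤ 1) {t : ℕ} (hU : #U = k + t) (ht : 4 * k ≤ δ * t) {A : Finset V} (hAU : A ⊆ U)
    {r : ℕ} (hr : #A + r = k) :
    ∃ Y ∈ (U \ A).powersetCard r, (#(G.interedges A Y) + mIn G Y : ℝ) ≤ 5 / 4 * δ * M := by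
  set W := U \ A
  have hW : #W = t + r := by rw [card_sdiff_of_subset hAU, hU]; omega
  obtain ⟨Y, hY, hYle⟩ := G.exists_card_interedges_add_mIn_le A (W := W) (r := r) (by omega)
  refine ⟨Y, hY, hYle.trans ?_⟩
  rcases Nat.eq_zero_or_pos r with rfl | hr₀
  · simp only [CharP.cast_eq_zero, zero_div, zero_mul, zero_sub, mul_neg, neg_zero, add_zero]
    positivity
  have htk : 4 * k ≤ t := by
    exact_mod_cast ht.trans (mul_le_of_le_one_left (Nat.cast_nonneg t) hδ₁)
  have hB := G.mul_card_interedges_mul_le_of_forall_cov_le (by linarith) hα₁ hM hAU (W := W)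
    sdiff_subset disjoint_sdiff (show r ≤ #W by omega) hr
  have hC := G.mul_mIn_mul_le_of_forall_cov_le (by linarith) hα₁ hM (W := W) sdiff_subset
    (show k ≤ #W by omega) (show 2 ≤ #W by omega)
  have hwR : (#W : ℝ) = t + r := by exact_mod_cast hW
  rw [hwR] at hB hC ⊢
  exact div_mul_add_div_mul_le hα hM₀ (Nat.cast_nonneg _) (Nat.cast_nonneg _) hδ₀ hδ₁ ht
    (by exact_mod_cast hr₀) (by exact_mod_cast (by omega : r ≤ k)) hB hC

lemma cov_le_of_forall_cov_le (hα : 1 / 3 ≤ α) (hα₁ : α ≤ 1)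
    (hM : ∀ T ∈ U.powersetCard k, cov G α T ≤ M) (hM₀ : 0 ≤ M) {δ : ℝ} (hδ₀ : 0 ≤ δ)
    (hδ₁ : δ ≤ 1) {t : ℕ} (hU : #U = k + t) (ht : 4 * k ≤ δ * t)
    (hUdeg : ∀ u ∈ U, ∀ w ∉ U, G.degree w ≤ G.degree u) {O : Finset V} (hO : #O = k) :
    cov G α O ≤ (1 + 5 / 2 * δ) * M := by
  have hk : #(O ∩ U) + #(O \ U) = k := by rw [card_inter_add_card_sdiff, hO]
  obtain ⟨Y, hY, hYle⟩ := G.exists_card_interedges_add_mIn_le_of_forall_cov_le hα hα₁ hM hM₀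
    hδ₀ hδ₁ hU ht inter_subset_right hk
  obtain ⟨hYU, hYr⟩ := mem_powersetCard.1 hY
  have hAY : Disjoint (O ∩ U) Y := disjoint_of_subset_right hYU disjoint_sdiff
  have hdeg : ∑ v ∈ O \ U, G.degree v ≤ ∑ v ∈ Y, G.degree v :=
    sum_le_sum_of_card_eq_of_forall_le hYr.symm fun w hw u hu =>
      hUdeg u (sdiff_subset (hYU hu)) w (mem_sdiff.1 hw).2
  have hswap := G.cov_union_le_cov_union_add hα (disjoint_sdiff_inter O U).symm hAY hdeg
  rw [union_comm, sdiff_union_inter] at hswap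
  have hAYM := hM _ (mem_powersetCard.2 ⟨union_subset inter_subset_right (hYU.trans sdiff_subset),
    by rw [card_union_of_disjoint hAY, hYr, hk]⟩)
  have hq : 0 ≤ (#(G.interedges (O ∩ U) Y) + mIn G Y : ℝ) := by positivity
  linarith [mul_le_mul_of_nonneg_right (by linarith : 3 * α - 1 ≤ 2) hq]

end Finite

end SimpleGraph

theorem stmt7_general {V : Type*} [Fintype V] [DecidableEq V] (G : SimpleGraph V)
    [DecidableRel G.Adj] (α ε : ℝ) (hα0 : 1 / 3 ≤ α) (hα1 : α ≤ 1)
    (hε0 : 0 < ε) (hε1 : ε < 1)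
    (k : ℕ)
    (V' : Finset V) (hV'card : V'.card = k + ⌈(4 * (k : ℝ)) / ε ^ 2⌉₊)
    (hV'top : ∀ u ∈ V', ∀ w ∉ V', G.degree w ≤ G.degree u) :
    ∃ S ⊆ V', S.card = k ∧
      ∀ O : Finset V, O.card = k → cov G α S ≥ (1 - ε) * cov G α O := by
  have ht : 4 * (k : ℝ) ≤ ε ^ 2 * ⌈(4 * (k : ℝ)) / ε ^ 2⌉₊ :=
    (div_le_iff₀' (by positivity)).1 (Nat.le_ceil _)
  obtain ⟨S, hS, hSmax⟩ := exists_max_image (V'.powersetCard k) (cov G α)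
    (powersetCard_nonempty.2 (by omega))
  obtain ⟨hSV', hSk⟩ := mem_powersetCard.1 hS
  have hM₀ := G.cov_nonneg (by linarith) hα1 S
  refine ⟨S, hSV', hSk, fun O hO => ?_⟩
  have hcovO := G.cov_le_of_forall_cov_le hα0 hα1 hSmax hM₀ (sq_nonneg ε) (by nlinarith)
    hV'card ht hV'top hO
  calc (1 - ε) * cov G α O ≤ (1 - ε) * ((1 + 5 / 2 * ε ^ 2) * cov G α S) :=
        mul_le_mul_of_nonneg_left hcovO (by linarith)
    _ ≤ cov G α S := by nlinarith [mul_nonneg hM₀ (mul_nonneg hε0.le (sq_nonneg (2 * ε - 1)))]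

theorem stmt7 {V : Type*} [Fintype V] [DecidableEq V] (G : SimpleGraph V)
    [DecidableRel G.Adj] (α ε : ℝ) (hα0 : 1 / 3 ≤ α) (hα1 : α ≤ 1)
    (hε0 : 0 < ε) (hε1 : ε < 1)
    (k : ℕ) (hk : k + ⌈(4 * (k : ℝ)) / ε ^ 2⌉₊ ≤ Fintype.card V)
    (V' : Finset V) (hV'card : V'.card = k + ⌈(4 * (k : ℝ)) / ε ^ 2⌉₊)
    (hV'top : ∀ u ∈ V', ∀ w ∉ V', G.degree w ≤ G.degree u) :
    ∃ S ⊆ V', S.card = k ∧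
      ∀ O : Finset V, O.card = k → cov G α S ≥ (1 - ε) * cov G α O :=
  stmt7_general G α ε hα0 hα1 hε0 hε1 k V' hV'card hV'top
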